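/- Under the hypotheses: 0 ≤ l < k ≤ n, n ≥ 3, a ∈ Γ⁺ with σ_k(a) = σ_l(a) and m := m_{k,l}(a) ∈ (2,n], let ψ(r,β) be the unique smooth solution on [1,+∞) of ψ^k + ξ̄_k(a) r ψ^{k−1}ψ′ − ψ^l − ξ̲_l(a) r ψ^{l−1}ψ′ = 0 (r > 1), ψ(1) = β, and for R ≥ 1, β ≥ 1 define μ_R(β) := ∫_R^{+∞} τ·(ψ(τ,β) − 1) dτ. Then: (a) the integral converges and μ_R(β) ≥ 0; (b) for each fixed R ≥ 1, β ↦ μ_R(β) is continuous and strictly increasing; (c) μ_R(β) ≥ (β−1)·R^{2−m}/(m−2), so μ_R(β) → +∞ as β → +∞ for each R ≥ 1; (d) for each fixed β ≥ 1, limsup_{R→+∞} R^{m−2}·μ_R(β) < ∞. -/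

import Mathlib

open Finset Filter MeasureTheory Set

noncomputable def esymm (n : ℕ) (k : ℤ) (a : Fin n → ℝ) : ℝ :=
  if 0 ≤ k then
    ∑ s ∈ Finset.powersetCard k.toNat (Finset.univ : Finset (Fin n)), ∏ i ∈ s, a i
  else 0

noncomputable def esymmDel (n : ℕ) (k : ℤ) (i : Fin n) (a : Fin n → ℝ) : ℝ :=
  if 0 ≤ k then
    ∑ s ∈ Finset.powersetCard k.toNat ((Finset.univ : Finset (Fin n)).erase i),
      ∏ j ∈ s, a j
  else 0

noncomputable def esymmDel2 (n : ℕ) (k : ℤ) (i j : Fin n) (a : Fin n → ℝ) : ℝ :=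
  if 0 ≤ k then
    ∑ s ∈ Finset.powersetCard k.toNat
        (((Finset.univ : Finset (Fin n)).erase i).erase j),
      ∏ t ∈ s, a t
  else 0

noncomputable def Xi (n : ℕ) (k : ℤ) (a x : Fin n → ℝ) : ℝ :=
  (∑ i, esymmDel n (k - 1) i a * a i ^ 2 * x i ^ 2) /
    (esymm n k a * ∑ i, a i * x i ^ 2)

noncomputable def xiSup (n : ℕ) (k : ℤ) (a : Fin n → ℝ) : ℝ :=
  sSup {y | ∃ x : Fin n → ℝ, x ≠ 0 ∧ Xi n k a x = y}

noncomputable def xiInf (n : ℕ) (k : ℤ) (a : Fin n → ℝ) : ℝ :=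
  sInf {y | ∃ x : Fin n → ℝ, x ≠ 0 ∧ Xi n k a x = y}

noncomputable def mkl (n : ℕ) (k l : ℤ) (a : Fin n → ℝ) : ℝ :=
  ((k : ℝ) - (l : ℝ)) / (xiSup n k a - xiInf n l a)

def GammaK (n : ℕ) (k : ℤ) : Set (Fin n → ℝ) :=
  {lam | ∀ j : ℤ, 1 ≤ j → j ≤ k → 0 < esymm n j lam}

noncomputable def hessian (n : ℕ) (f : (Fin n → ℝ) → ℝ) (x : Fin n → ℝ) :
    Matrix (Fin n) (Fin n) ℝ :=
  fun i j => fderiv ℝ (fun y => fderiv ℝ f y (Pi.single j 1)) x (Pi.single i 1)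

def IsViscSubsol (n : ℕ) (k l : ℤ) (Ω : Set (Fin n → ℝ)) (u : (Fin n → ℝ) → ℝ) : Prop :=
  ∀ v : (Fin n → ℝ) → ℝ, ContDiffOn ℝ 2 v Ω →
    ∀ x₀ ∈ Ω, (∀ x ∈ Ω, u x ≤ v x) → v x₀ = u x₀ →
      ∀ hH : (hessian n v x₀).IsHermitian,
        esymm n l hH.eigenvalues ≤ esymm n k hH.eigenvalues

def IsViscSupersol (n : ℕ) (k l : ℤ) (Ω : Set (Fin n → ℝ)) (u : (Fin n → ℝ) → ℝ) : Prop :=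
  ∀ v : (Fin n → ℝ) → ℝ, ContDiffOn ℝ 2 v Ω →
    (∀ x ∈ Ω, ∀ hH : (hessian n v x).IsHermitian,
      hH.eigenvalues ∈ closure (GammaK n k)) →
    ∀ x₀ ∈ Ω, (∀ x ∈ Ω, v x ≤ u x) → v x₀ = u x₀ →
      ∀ hH : (hessian n v x₀).IsHermitian,
        esymm n k hH.eigenvalues ≤ esymm n l hH.eigenvalues

def IsViscSol (n : ℕ) (k l : ℤ) (Ω : Set (Fin n → ℝ)) (u : (Fin n → ℝ) → ℝ) : Prop :=
  IsViscSubsol n k l Ω u ∧ IsViscSupersol n k l Ω u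

def SolvesODE (n : ℕ) (k l : ℤ) (a : Fin n → ℝ) (β : ℝ) (ψ : ℝ → ℝ) : Prop :=
  ContDiffOn ℝ (⊤ : ℕ∞) ψ (Set.Ici 1) ∧ ψ 1 = β ∧
  ∀ r : ℝ, 1 < r →
    ψ r ^ k + xiSup n k a * r * ψ r ^ (k - 1) * deriv ψ r
      - ψ r ^ l - xiInf n l a * r * ψ r ^ (l - 1) * deriv ψ r = 0

namespace MuAux

structure St where
  k : ℤ
  l : ℤ
  hl : 0 ≤ l
  hlk : l < k
  xu : ℝ
  xl : ℝ
  hxl0 : 0 ≤ xl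
  hlt : xl < xu
  hm2 : 2 < ((k : ℝ) - l) / (xu - xl)

namespace St

variable (S : St)

noncomputable def d : ℝ := (S.k : ℝ) - S.l
noncomputable def dl : ℝ := S.xu - S.xl
noncomputable def m : ℝ := S.d / S.dl
def dn : ℕ := (S.k - S.l).toNat
def ln : ℕ := S.l.toNat
def kn : ℕ := S.k.toNat
noncomputable def g (t : ℝ) : ℝ := S.xu * t ^ (S.k - 1) - S.xl * t ^ (S.l - 1)
noncomputable def s (t : ℝ) : ℝ := ∑ j ∈ Finset.range S.dn, t ^ (S.ln + j)

lemma dl_pos : 0 < S.dl := sub_pos.2 S.hlt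
lemma xu_pos : 0 < S.xu := lt_of_le_of_lt S.hxl0 S.hlt
lemma one_le_d : 1 ≤ S.d := by
  have h : S.l + 1 ≤ S.k := S.hlk
  have h2 : ((S.l : ℝ) + 1) ≤ (S.k : ℝ) := by exact_mod_cast h
  simp only [d]; linarith
lemma d_pos : 0 < S.d := lt_of_lt_of_le one_pos S.one_le_d
lemma m_pos : 0 < S.m := div_pos S.d_pos S.dl_pos
lemma two_lt_m : 2 < S.m := S.hm2
lemma m_mul_dl : S.m * S.dl = S.d := div_mul_cancel₀ _ S.dl_pos.ne'
lemma k_eq : S.k = (S.kn : ℤ) := (Int.toNat_of_nonneg (le_of_lt (lt_of_le_of_lt S.hl S.hlk))).symm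
lemma l_eq : S.l = (S.ln : ℤ) := (Int.toNat_of_nonneg S.hl).symm
lemma kn_eq : S.kn = S.ln + S.dn := by
  have h1 := S.hl; have h2 := S.hlk
  simp only [kn, ln, dn]; omega
lemma dn_pos : 0 < S.dn := by
  have h1 := S.hl; have h2 := S.hlk; simp only [dn]; omega
lemma one_le_kn : 1 ≤ S.kn := by
  have := S.hlk; have := S.hl; simp only [kn]; omega
lemma d_eq_dn : S.d = (S.dn : ℝ) := by
  have h2 := S.hlk
  have h1 : (0:ℤ) ≤ S.k - S.l := by omega
  simp only [d, dn]
  rw [← Int.cast_natCast, Int.toNat_of_nonneg h1]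
  push_cast; ring

lemma num_eq (t : ℝ) : t ^ S.k - t ^ S.l = (t - 1) * S.s t := by
  rw [S.k_eq, S.l_eq, zpow_natCast, zpow_natCast]
  have h1 : t ^ S.kn = t ^ S.ln * t ^ S.dn := by rw [S.kn_eq, pow_add]
  have h2 : S.s t = t ^ S.ln * ∑ j ∈ Finset.range S.dn, t ^ j := by
    rw [s, Finset.mul_sum]
    exact Finset.sum_congr rfl fun j _ => by rw [pow_add]
  have h3 := geom_sum_mul t S.dn
  rw [h1, h2]
  linear_combination (-(t ^ S.ln)) * h3

lemma s_pos {t : ℝ} (ht : 0 < t) : 0 < S.s t := by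
  apply Finset.sum_pos (fun j _ => pow_pos ht _)
  exact Finset.nonempty_range_iff.2 S.dn_pos.ne'

/-- `d ≤ s t` for `t ≥ 1`. -/
lemma d_le_s {t : ℝ} (ht : 1 ≤ t) : S.d ≤ S.s t := by
  rw [S.d_eq_dn]
  calc ((S.dn : ℝ)) = ∑ _j ∈ Finset.range S.dn, (1:ℝ) := by simp
  _ ≤ S.s t := Finset.sum_le_sum fun j _ => one_le_pow₀ ht

/-- `s t ≤ d * t^(k-1)` for `t ≥ 1`. -/
lemma s_le (t : ℝ) (ht : 1 ≤ t) : S.s t ≤ S.d * t ^ (S.k - 1) := by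
  have hk1 : S.k - 1 = ((S.kn - 1 : ℕ) : ℤ) := by
    have h0 := S.one_le_kn; rw [S.k_eq]; omega
  rw [hk1, zpow_natCast, S.d_eq_dn]
  calc S.s t ≤ ∑ _j ∈ Finset.range S.dn, t ^ (S.kn - 1) := by
        apply Finset.sum_le_sum
        intro j hj
        apply pow_le_pow_right₀ ht
        have := Finset.mem_range.1 hj
        have := S.kn_eq
        omega
  _ = (S.dn : ℝ) * t ^ (S.kn - 1) := by rw [Finset.sum_const, Finset.card_range, nsmul_eq_mul]

/-- `d * t^(l-1) ≤ s t` for `t ≥ 1`. -/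
lemma le_s (t : ℝ) (ht : 1 ≤ t) : S.d * t ^ (S.l - 1) ≤ S.s t := by
  rw [S.d_eq_dn]
  calc (S.dn : ℝ) * t ^ (S.l - 1) = ∑ _j ∈ Finset.range S.dn, t ^ (S.l - 1) := by
        rw [Finset.sum_const, Finset.card_range, nsmul_eq_mul]
  _ ≤ S.s t := by
      apply Finset.sum_le_sum
      intro j _
      calc t ^ (S.l - 1) ≤ t ^ (S.l : ℤ) := zpow_le_zpow_right₀ ht (by omega)
      _ = t ^ S.ln := by rw [S.l_eq, zpow_natCast]
      _ ≤ t ^ (S.ln + j) := pow_le_pow_right₀ ht (by omega)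

/-- Claim A : `dl * s t ≤ d * g t` for `t ≥ 1`. -/
lemma claimA {t : ℝ} (ht : 1 ≤ t) : S.dl * S.s t ≤ S.d * S.g t := by
  have h1 := S.s_le t ht
  have h2 := S.le_s t ht
  have hxu := S.xu_pos
  have hxl := S.hxl0
  have hd := S.d_pos
  simp only [g, dl]
  nlinarith [mul_le_mul_of_nonneg_left h1 (le_of_lt hxu),
    mul_le_mul_of_nonneg_left h2 hxl]

/-- `g t ≥ dl * t^(l-1) > 0` for `t ≥ 1`. -/
lemma g_ge {t : ℝ} (ht : 1 ≤ t) : S.dl * t ^ (S.l - 1) ≤ S.g t := by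
  have hkl := S.hlk
  have h1 : t ^ (S.l - 1) ≤ t ^ (S.k - 1) := zpow_le_zpow_right₀ ht (by omega)
  have hxu := S.xu_pos
  simp only [g, dl]
  nlinarith
lemma g_pos {t : ℝ} (ht : 1 ≤ t) : 0 < S.g t :=
  lt_of_lt_of_le (mul_pos S.dl_pos (zpow_pos (by linarith) _)) (S.g_ge ht)


lemma s_le_mg {t : ℝ} (ht : 1 ≤ t) : S.s t ≤ S.m * S.g t := by
  have h := S.claimA ht
  have h2 := S.m_mul_dl
  have hdl := S.dl_pos
  rw [← mul_le_mul_iff_right₀ hdl]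
  calc S.dl * S.s t ≤ S.d * S.g t := h
  _ = S.dl * (S.m * S.g t) := by rw [← h2]; ring

noncomputable def eps : ℝ := (1 - S.xl / S.xu) / (2 * S.dn)

lemma ratio_lt_one : S.xl / S.xu < 1 := (div_lt_one S.xu_pos).2 S.hlt
lemma ratio_nonneg : 0 ≤ S.xl / S.xu := div_nonneg S.hxl0 S.xu_pos.le

lemma eps_pos : 0 < S.eps := by
  have h1 := S.ratio_lt_one
  have h2 : (0:ℝ) < 2 * S.dn := by
    have := S.dn_pos
    positivity
  exact div_pos (by linarith) h2

lemma eps_le_half : S.eps ≤ 1 / 2 := by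
  have h1 := S.ratio_nonneg
  have h2 : (1:ℝ) ≤ S.dn := by exact_mod_cast S.dn_pos
  rw [eps, div_le_div_iff₀ (by positivity) (by norm_num)]
  nlinarith

lemma g_pos_band {t : ℝ} (ht : 1 - S.eps ≤ t) : 0 < S.g t := by
  have heps := S.eps_pos
  have hhalf := S.eps_le_half
  have ht0 : 0 < t := by linarith
  have hkl : ((S.dn : ℤ)) = S.k - S.l := by
    have h1 := S.hl; have h2 := S.hlk; simp only [dn]; omega
  have hfac : t ^ (S.k - 1) = t ^ (S.l - 1) * t ^ S.dn := by
    rw [← zpow_natCast t S.dn, ← zpow_add₀ ht0.ne']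
    congr 1; omega
  have hg : S.g t = t ^ (S.l - 1) * (S.xu * t ^ S.dn - S.xl) := by
    simp only [g, hfac]; ring
  have hbern : 1 - S.dn * S.eps ≤ (1 - S.eps) ^ S.dn := by
    have := one_add_mul_le_pow (a := -S.eps) (by linarith) S.dn
    calc 1 - S.dn * S.eps = 1 + S.dn * (-S.eps) := by ring
    _ ≤ (1 + -S.eps) ^ S.dn := this
    _ = (1 - S.eps) ^ S.dn := by ring_nf
  have hpow : (1 - S.eps) ^ S.dn ≤ t ^ S.dn :=
    pow_le_pow_left₀ (by linarith) ht S.dn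
  have hde : S.dn * S.eps = (1 - S.xl / S.xu) / 2 := by
    rw [eps]
    have : (S.dn : ℝ) ≠ 0 := by exact_mod_cast S.dn_pos.ne'
    field_simp
  have hratio : S.xu * (S.xl / S.xu) = S.xl := by
    rw [mul_comm S.xu (S.xl / S.xu), div_mul_cancel₀ _ S.xu_pos.ne']
  have hpos : 0 < S.xu * t ^ S.dn - S.xl := by
    have h1 : 1 - S.dn * S.eps ≤ t ^ S.dn := le_trans hbern hpow
    have h2 : S.xu * (1 - S.dn * S.eps) ≤ S.xu * t ^ S.dn :=
      mul_le_mul_of_nonneg_left h1 S.xu_pos.le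
    rw [hde] at h2
    have := S.dl_pos
    have hxu := S.xu_pos
    nlinarith [S.hlt]
  rw [hg]
  exact mul_pos (zpow_pos ht0 _) hpos

lemma half_le_zpow {t : ℝ} (ht : 1 ≤ t) (ht2 : t ≤ 2) : (1:ℝ)/2 ≤ t ^ (S.l - 1) := by
  rcases le_or_gt 1 S.l with h | h
  · have : (1:ℝ) ≤ t ^ (S.l - 1) := one_le_zpow₀ ht (by omega)
    linarith
  · have hl0 : S.l = 0 := by have := S.hl; omega
    rw [hl0]
    norm_num
    have ht0 : (0:ℝ) < t := by linarith
    have h2 : t⁻¹ = 1/t := (one_div t).symm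
    rw [h2, le_div_iff₀ ht0]
    linarith

lemma one_sub_zpow_le {t : ℝ} (ht : 1 ≤ t) : 1 - t ^ (S.l - 1) ≤ t - 1 := by
  rcases le_or_gt 1 S.l with h | h
  · have : (1:ℝ) ≤ t ^ (S.l - 1) := one_le_zpow₀ ht (by omega)
    linarith
  · have hl0 : S.l = 0 := by have := S.hl; omega
    rw [hl0]
    norm_num
    have ht0 : (0:ℝ) < t := by linarith
    nlinarith [mul_inv_cancel₀ (ne_of_gt ht0), sq_nonneg (t - 1), inv_nonneg.2 ht0.le]

lemma pow_sub_one_le {t : ℝ} (j : ℕ) (ht : 1 ≤ t) (ht2 : t ≤ 2) :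
    t ^ j - 1 ≤ 2 ^ j * (t - 1) := by
  have h1 := geom_sum_mul t j
  have h2 := geom_sum_mul (2:ℝ) j
  have hsum : (∑ i ∈ Finset.range j, t ^ i) ≤ ∑ i ∈ Finset.range j, (2:ℝ) ^ i :=
    Finset.sum_le_sum fun i _ => pow_le_pow_left₀ (by linarith) ht2 i
  have hsum2 : (∑ i ∈ Finset.range j, (2:ℝ) ^ i) = 2 ^ j - 1 := by linarith
  nlinarith [pow_pos (lt_of_lt_of_le one_pos ht) j]

noncomputable def C1 : ℝ := S.d * S.xu * 2 ^ S.kn + S.d * S.xl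

lemma C1_nonneg : 0 ≤ S.C1 := by
  have h1 := S.d_pos; have h2 := S.xu_pos; have h3 := S.hxl0
  have h4 : (0:ℝ) < 2 ^ S.kn := by positivity
  simp only [C1]
  nlinarith [mul_pos (mul_pos h1 h2) h4, mul_nonneg h1.le h3]

lemma band_lin {t : ℝ} (ht : 1 ≤ t) (ht2 : t ≤ 2) :
    S.d * S.g t - S.dl * S.s t ≤ S.C1 * (t - 1) := by
  have hs := S.d_le_s ht
  have hzp : t ^ (S.k - 1) = t ^ (S.kn - 1) := by
    have h0 := S.one_le_kn
    have : S.k - 1 = ((S.kn - 1 : ℕ) : ℤ) := by rw [S.k_eq]; omega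
    rw [this, zpow_natCast]
  have hk1 : t ^ (S.kn - 1) - 1 ≤ 2 ^ S.kn * (t - 1) := by
    have := pow_sub_one_le (S.kn - 1) ht ht2
    have h2 : (2:ℝ) ^ (S.kn - 1) ≤ 2 ^ S.kn := pow_le_pow_right₀ (by norm_num) (by omega)
    nlinarith
  have hl1 := S.one_sub_zpow_le ht
  have hd := S.d_pos
  have hxu := S.xu_pos
  have hxl := S.hxl0
  have hdl := S.dl_pos
  simp only [g, C1, dl] at *
  rw [hzp]
  nlinarith [mul_le_mul_of_nonneg_left hk1 (mul_pos hd hxu).le,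
    mul_le_mul_of_nonneg_left hl1 (mul_nonneg hd.le hxl),
    mul_le_mul_of_nonneg_left hs hdl.le]

noncomputable def C0 : ℝ := 2 * S.C1 / S.dl ^ 2

lemma C0_nonneg : 0 ≤ S.C0 := by
  have := S.C1_nonneg; have := S.dl_pos
  simp only [C0]; positivity

lemma sharp_lower {t : ℝ} (ht : 1 ≤ t) (ht2 : t ≤ 2) :
    (S.m - S.C0 * (t - 1)) * S.g t ≤ S.s t := by
  have hb := S.band_lin ht ht2
  have hg2 : S.dl / 2 ≤ S.g t := by
    have h1 := S.g_ge ht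
    have h2 := S.half_le_zpow ht ht2
    have := S.dl_pos
    nlinarith
  have hdl := S.dl_pos
  have hC1 := S.C1_nonneg
  have hmdl := S.m_mul_dl
  have hgpos := S.g_pos ht
  -- m * g t - s t ≤ C1 * (t-1) / dl  ≤  C0 * (t-1) * g t
  have key : S.m * S.g t - S.s t ≤ S.C1 * (t - 1) / S.dl := by
    rw [le_div_iff₀ hdl]
    nlinarith
  have key2 : S.C1 * (t - 1) / S.dl ≤ S.C0 * (t - 1) * S.g t := by
    rw [div_le_iff₀ hdl, C0]
    have ht1 : 0 ≤ t - 1 := by linarith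
    have e1 : 2 * S.C1 / S.dl ^ 2 * (t - 1) * S.g t * S.dl
        = (S.C1 * (t-1)) * (2 * S.g t / S.dl) := by
      field_simp
    rw [e1]
    have : (1:ℝ) ≤ 2 * S.g t / S.dl := by
      rw [le_div_iff₀ hdl]; nlinarith
    nlinarith [mul_nonneg hC1 ht1]
  nlinarith


lemma zpow_k_sub_one (t : ℝ) : t ^ (S.k - 1) = t ^ (S.kn - 1) := by
  have h0 := S.one_le_kn
  have : S.k - 1 = ((S.kn - 1 : ℕ) : ℤ) := by rw [S.k_eq]; omega
  rw [this, zpow_natCast]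

noncomputable def Fq (t : ℝ) : ℝ := (t - 1) * S.s t / S.g t
noncomputable def sd (t : ℝ) : ℝ :=
  ∑ j ∈ Finset.range S.dn, ((S.ln + j : ℕ) : ℝ) * t ^ (S.ln + j - 1)
noncomputable def gd (t : ℝ) : ℝ :=
  S.xu * (((S.k - 1 : ℤ) : ℝ) * t ^ (S.k - 1 - 1)) -
    S.xl * (((S.l - 1 : ℤ) : ℝ) * t ^ (S.l - 1 - 1))
noncomputable def Fd (t : ℝ) : ℝ :=
  ((1 * S.s t + (t - 1) * S.sd t) * S.g t - (t - 1) * S.s t * S.gd t) / S.g t ^ 2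

lemma s_hasDeriv (t : ℝ) : HasDerivAt S.s (S.sd t) t := by
  apply HasDerivAt.fun_sum
  intro j _
  exact hasDerivAt_pow (S.ln + j) t

lemma sd_continuous : Continuous S.sd := by
  apply continuous_finset_sum
  intro j _
  exact continuous_const.mul (continuous_pow _)

lemma g_hasDeriv {t : ℝ} (ht : t ≠ 0) : HasDerivAt S.g (S.gd t) t :=
  ((hasDerivAt_zpow (S.k - 1) t (Or.inl ht)).const_mul S.xu).sub
    ((hasDerivAt_zpow (S.l - 1) t (Or.inl ht)).const_mul S.xl)

lemma gd_continuousAt {t : ℝ} (ht : t ≠ 0) : ContinuousAt S.gd t := by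
  apply ContinuousAt.sub
  · exact continuousAt_const.mul
      (continuousAt_const.mul (hasDerivAt_zpow (S.k - 1 - 1) t (Or.inl ht)).continuousAt)
  · exact continuousAt_const.mul
      (continuousAt_const.mul (hasDerivAt_zpow (S.l - 1 - 1) t (Or.inl ht)).continuousAt)

lemma Fq_hasDeriv {t : ℝ} (ht : t ≠ 0) (hg : S.g t ≠ 0) :
    HasDerivAt S.Fq (S.Fd t) t := by
  have hnum : HasDerivAt (fun t => (t - 1) * S.s t) (1 * S.s t + (t - 1) * S.sd t) t :=
    ((hasDerivAt_id t).sub_const 1).mul (S.s_hasDeriv t)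
  exact hnum.div (S.g_hasDeriv ht) hg

lemma Fd_contOn {B : ℝ} (hB : 1 ≤ B) : ContinuousOn S.Fd (Set.Icc 1 B) := by
  intro t htm
  have ht1 : (1:ℝ) ≤ t := htm.1
  have htne : t ≠ 0 := by intro h; rw [h] at ht1; norm_num at ht1
  have hgpos := S.g_pos ht1
  apply ContinuousAt.continuousWithinAt
  apply ContinuousAt.div
  · apply ContinuousAt.sub
    · exact (ContinuousAt.add (continuousAt_const.mul (S.s_hasDeriv t).continuousAt)
        (((continuousAt_id.sub continuousAt_const)).mul S.sd_continuous.continuousAt)).mul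
        (S.g_hasDeriv htne).continuousAt
    · exact (((continuousAt_id.sub continuousAt_const)).mul
        (S.s_hasDeriv t).continuousAt).mul (S.gd_continuousAt htne)
  · exact (S.g_hasDeriv htne).continuousAt.pow 2
  · exact pow_ne_zero 2 (ne_of_gt hgpos)

lemma lipschitzFq {B : ℝ} (hB : 1 ≤ B) : ∃ L, 0 ≤ L ∧
    ∀ t1 t2, t1 ∈ Set.Icc 1 B → t2 ∈ Set.Icc 1 B →
      |S.Fq t1 - S.Fq t2| ≤ L * |t1 - t2| := by
  obtain ⟨C, hC⟩ := IsCompact.exists_bound_of_continuousOn isCompact_Icc (S.Fd_contOn hB)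
  have h1B : (1:ℝ) ∈ Set.Icc 1 B := ⟨le_refl 1, hB⟩
  refine ⟨C, le_trans (norm_nonneg _) (hC 1 h1B), ?_⟩
  intro t1 t2 h1 h2
  have hdiffAt : ∀ x ∈ Set.Icc 1 B, DifferentiableAt ℝ S.Fq x := by
    intro x hx
    have hx1 : (1:ℝ) ≤ x := hx.1
    exact (S.Fq_hasDeriv (by intro h; rw [h] at hx1; norm_num at hx1)
      (ne_of_gt (S.g_pos hx1))).differentiableAt
  have hbound : ∀ x ∈ Set.Icc 1 B, ‖deriv S.Fq x‖ ≤ C := by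
    intro x hx
    have hx1 : (1:ℝ) ≤ x := hx.1
    rw [(S.Fq_hasDeriv (by intro h; rw [h] at hx1; norm_num at hx1)
      (ne_of_gt (S.g_pos hx1))).deriv]
    exact hC x hx
  have := Convex.norm_image_sub_le_of_norm_deriv_le hdiffAt hbound (convex_Icc 1 B) h2 h1
  simpa [Real.norm_eq_abs] using this

end St

structure Sol (S : St) where
  β : ℝ
  hβ : 1 ≤ β
  ψ : ℝ → ℝ
  hsmooth : ContDiffOn ℝ (⊤ : ℕ∞) ψ (Set.Ici 1)
  hinit : ψ 1 = β
  hode : ∀ r : ℝ, 1 < r →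
    ψ r ^ S.k + S.xu * r * ψ r ^ (S.k - 1) * deriv ψ r
      - ψ r ^ S.l - S.xl * r * ψ r ^ (S.l - 1) * deriv ψ r = 0

namespace Sol

variable {S : St} (P : Sol S)

lemma hcont : ContinuousOn P.ψ (Set.Ici 1) := P.hsmooth.continuousOn

lemma hdiff {r : ℝ} (hr : 1 < r) : DifferentiableAt ℝ P.ψ r :=
  (P.hsmooth.contDiffAt (Ici_mem_nhds hr)).differentiableAt (by simp)

lemma ode2 {r : ℝ} (hr : 1 < r) :
    r * S.g (P.ψ r) * deriv P.ψ r = -((P.ψ r - 1) * S.s (P.ψ r)) := by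
  have h := P.hode r hr
  have h2 := S.num_eq (P.ψ r)
  simp only [St.g]
  linear_combination h - h2

lemma one_le : ∀ r : ℝ, 1 ≤ r → 1 ≤ P.ψ r := by
  by_contra hcon
  push_neg at hcon
  obtain ⟨r₂, hr₂1, hr₂⟩ := hcon
  have hβ := P.hβ
  have hr₂1' : 1 < r₂ := by
    rcases lt_or_eq_of_le hr₂1 with h | h
    · exact h
    · exfalso; rw [← h, P.hinit] at hr₂; linarith
  -- the set where ψ ≥ 1
  set A : Set ℝ := Icc 1 r₂ ∩ P.ψ ⁻¹' (Ici 1) with hA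
  have hclA : IsClosed A :=
    (P.hcont.mono (Icc_subset_Ici_self)).preimage_isClosed_of_isClosed isClosed_Icc isClosed_Ici
  have hneA : A.Nonempty := ⟨1, ⟨le_refl 1, hr₂1⟩, by simp [P.hinit, hβ]⟩
  have hbddA : BddAbove A := BddAbove.mono inter_subset_left bddAbove_Icc
  set c := sSup A with hc
  have hcA : c ∈ A := hclA.csSup_mem hneA hbddA
  obtain ⟨⟨hc1, hcr₂⟩, hψc⟩ := hcA
  have hψc : 1 ≤ P.ψ c := hψc
  have hcr₂' : c < r₂ := lt_of_le_of_ne hcr₂ (fun h => by rw [h] at hψc; linarith)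
  have habove : ∀ r, c < r → r ≤ r₂ → P.ψ r < 1 := by
    intro r h1 h2
    by_contra hge
    push_neg at hge
    have : r ∈ A := ⟨⟨by linarith, h2⟩, hge⟩
    exact absurd (le_csSup hbddA this) (not_le.2 h1)
  have heps := S.eps_pos
  have hhalf := S.eps_le_half
  -- find r₃
  set B : Set ℝ := Icc c r₂ ∩ P.ψ ⁻¹' (Iic (1 - S.eps)) with hB
  have hclB : IsClosed B :=
    (P.hcont.mono (fun x hx => le_trans hc1 hx.1)).preimage_isClosed_of_isClosed
      isClosed_Icc isClosed_Iic
  have key : ∃ r₃, c < r₃ ∧ r₃ ≤ r₂ ∧ P.ψ r₃ < 1 ∧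
      ∀ r, c < r → r < r₃ → 1 - S.eps < P.ψ r ∧ P.ψ r < 1 := by
    rcases eq_empty_or_nonempty B with hBe | hBne
    · refine ⟨r₂, hcr₂', le_refl _, hr₂, fun r h1 h2 => ?_⟩
      constructor
      · by_contra hle
        push_neg at hle
        have : r ∈ B := ⟨⟨le_of_lt h1, by linarith⟩, hle⟩
        rw [hBe] at this; exact this
      · exact habove r h1 (by linarith)
    · have hbddB : BddBelow B := BddBelow.mono inter_subset_left bddBelow_Icc
      set r₃ := sInf B with hr₃def
      have hr₃B : r₃ ∈ B := hclB.csInf_mem hBne hbddB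
      obtain ⟨⟨hr₃c, hr₃r₂⟩, hψr₃⟩ := hr₃B
      have hψr₃ : P.ψ r₃ ≤ 1 - S.eps := hψr₃
      have hcr₃ : c < r₃ := lt_of_le_of_ne hr₃c (fun h => by rw [← h] at hψr₃; linarith)
      refine ⟨r₃, hcr₃, hr₃r₂, by linarith, fun r h1 h2 => ?_⟩
      constructor
      · by_contra hle
        push_neg at hle
        have : r ∈ B := ⟨⟨le_of_lt h1, by linarith⟩, hle⟩
        exact absurd (csInf_le hbddB this) (not_le.2 h2)
      · exact habove r h1 (by linarith)
  obtain ⟨r₃, hcr₃, hr₃r₂, hψr₃lt, hmid⟩ := key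
  -- ψ is strictly increasing on [c, r₃], contradiction
  have hmono : StrictMonoOn P.ψ (Icc c r₃) := by
    apply strictMonoOn_of_deriv_pos (convex_Icc c r₃)
    · exact P.hcont.mono (fun x hx => le_trans hc1 hx.1)
    · intro x hx
      rw [interior_Icc] at hx
      have hx1 : 1 < x := lt_of_le_of_lt hc1 hx.1
      obtain ⟨hlo, hhi⟩ := hmid x hx.1 hx.2
      have hψx0 : 0 < P.ψ x := by linarith
      have hgpos : 0 < S.g (P.ψ x) := S.g_pos_band (le_of_lt hlo)
      have hspos : 0 < S.s (P.ψ x) := S.s_pos hψx0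
      have hid := P.ode2 hx1
      have hrhs : 0 < -((P.ψ x - 1) * S.s (P.ψ x)) := by nlinarith
      have hxg : 0 < x * S.g (P.ψ x) := by positivity
      nlinarith [mul_pos hxg hrhs]
  have := hmono (left_mem_Icc.2 (le_of_lt hcr₃)) (right_mem_Icc.2 (le_of_lt hcr₃)) hcr₃
  linarith

lemma deriv_nonpos {r : ℝ} (hr : 1 < r) : deriv P.ψ r ≤ 0 := by
  have h1 := P.one_le r (le_of_lt hr)
  have hid := P.ode2 hr
  have hgpos : 0 < S.g (P.ψ r) := S.g_pos h1
  have hspos : 0 < S.s (P.ψ r) := S.s_pos (by linarith)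
  have hxg : 0 < r * S.g (P.ψ r) := by positivity
  nlinarith [mul_nonneg (mul_nonneg (by linarith : (0:ℝ) ≤ P.ψ r - 1) hspos.le) hxg.le]

lemma antitone : AntitoneOn P.ψ (Set.Ici 1) := by
  apply antitoneOn_of_deriv_nonpos (convex_Ici 1) P.hcont
  · intro x hx
    rw [interior_Ici] at hx
    exact (P.hdiff hx).differentiableWithinAt
  · intro x hx
    rw [interior_Ici] at hx
    exact P.deriv_nonpos hx

lemma le_beta {r : ℝ} (hr : 1 ≤ r) : P.ψ r ≤ P.β := by
  have := P.antitone (Set.self_mem_Ici) hr hr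
  rwa [P.hinit] at this


lemma aux_hasDeriv (p : ℝ) {x : ℝ} (hx : 1 < x) :
    HasDerivAt (fun r => (P.ψ r - 1) * r ^ p)
      (deriv P.ψ x * x ^ p + (P.ψ x - 1) * (p * x ^ (p - 1))) x := by
  have h1 : HasDerivAt (fun r => P.ψ r - 1) (deriv P.ψ x) x :=
    ((P.hdiff hx).hasDerivAt).sub_const 1
  have h2 : HasDerivAt (fun r : ℝ => r ^ p) (p * x ^ (p - 1)) x :=
    Real.hasDerivAt_rpow_const (Or.inl (ne_of_gt (lt_trans one_pos hx)))
  exact h1.mul h2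

lemma aux_contOn (p : ℝ) {a : ℝ} (ha : 1 ≤ a) :
    ContinuousOn (fun r => (P.ψ r - 1) * r ^ p) (Set.Ici a) := by
  apply ContinuousOn.mul
  · exact (P.hcont.mono (Ici_subset_Ici.2 ha)).sub continuousOn_const
  · intro x hx
    exact (Real.continuousAt_rpow_const x p
      (Or.inl (by simp only [Set.mem_Ici] at hx; intro h; rw [h] at hx; linarith))).continuousWithinAt

lemma deriv_ge {x : ℝ} (hx : 1 < x) :
    -(S.m * (P.ψ x - 1)) ≤ deriv P.ψ x * x := by
  have ht1 := P.one_le x hx.le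
  have hg := S.g_pos ht1
  have hsm := S.s_le_mg ht1
  have hid := P.ode2 hx
  apply le_of_mul_le_mul_right _ hg
  nlinarith [mul_le_mul_of_nonneg_left hsm (by linarith : (0:ℝ) ≤ P.ψ x - 1)]

lemma lb : ∀ r : ℝ, 1 ≤ r → P.β - 1 ≤ (P.ψ r - 1) * r ^ S.m := by
  have hmono : MonotoneOn (fun r => (P.ψ r - 1) * r ^ S.m) (Set.Ici 1) := by
    apply monotoneOn_of_deriv_nonneg (convex_Ici 1) (P.aux_contOn S.m le_rfl)
    · intro x hx
      rw [interior_Ici, Set.mem_Ioi] at hx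
      exact ((P.aux_hasDeriv S.m hx).differentiableAt).differentiableWithinAt
    · intro x hx
      rw [interior_Ici, Set.mem_Ioi] at hx
      rw [(P.aux_hasDeriv S.m hx).deriv]
      have hxpos : (0:ℝ) < x := by linarith
      have ht1 := P.one_le x hx.le
      have hkey := P.deriv_ge hx
      have hmpos := S.m_pos
      have e1 : x ^ (S.m - 1) * x = x ^ S.m := by
        rw [← Real.rpow_add_one (ne_of_gt hxpos)]; ring_nf
      have hA1 : (0:ℝ) < x ^ (S.m - 1) := Real.rpow_pos_of_pos hxpos _
      have e3 : deriv P.ψ x * x ^ S.m = (deriv P.ψ x * x) * x ^ (S.m - 1) := by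
        rw [← e1]; ring
      nlinarith [mul_le_mul_of_nonneg_right hkey hA1.le, e3]
  intro r hr
  have h := hmono (Set.self_mem_Ici) hr hr
  simp only [P.hinit, Real.one_rpow, mul_one] at h
  exact h

noncomputable def crate : ℝ := S.d / (S.xu * P.β ^ (S.kn - 1))

lemma Gm_pos : 0 < S.xu * P.β ^ (S.kn - 1) := by
  have := S.xu_pos
  have hb : (0:ℝ) < P.β := by linarith [P.hβ]
  positivity

lemma crate_pos : 0 < P.crate := div_pos S.d_pos P.Gm_pos

lemma g_le_Gm {t : ℝ} (ht : 1 ≤ t) (htβ : t ≤ P.β) :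
    S.g t ≤ S.xu * P.β ^ (S.kn - 1) := by
  have h1 : t ^ (S.k - 1) = t ^ (S.kn - 1) := S.zpow_k_sub_one t
  have h2 : t ^ (S.kn - 1) ≤ P.β ^ (S.kn - 1) := pow_le_pow_left₀ (by linarith) htβ _
  have h3 : (0:ℝ) ≤ S.xl * t ^ (S.l - 1) :=
    mul_nonneg S.hxl0 (zpow_nonneg (by linarith) _)
  have := S.xu_pos
  simp only [St.g]
  rw [h1]
  nlinarith

lemma deriv_le {x : ℝ} (hx : 1 < x) :
    deriv P.ψ x * x ≤ -(P.crate * (P.ψ x - 1)) := by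
  have ht1 := P.one_le x hx.le
  have htβ := P.le_beta hx.le
  have hg := S.g_pos ht1
  have hGm := P.Gm_pos
  have hgle := P.g_le_Gm ht1 htβ
  have hsd := S.d_le_s ht1
  have hid := P.ode2 hx
  have hcancel : P.crate * (S.xu * P.β ^ (S.kn - 1)) = S.d :=
    div_mul_cancel₀ _ (ne_of_gt hGm)
  apply le_of_mul_le_mul_right _ (mul_pos hGm hg)
  have hnn : (0:ℝ) ≤ P.ψ x - 1 := by linarith
  have hspos := S.s_pos (by linarith : (0:ℝ) < P.ψ x)
  have h2 : (P.ψ x - 1) * S.d * S.g (P.ψ x)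
      ≤ (P.ψ x - 1) * S.s (P.ψ x) * (S.xu * P.β ^ (S.kn - 1)) := by
    have ha : (P.ψ x - 1) * S.d ≤ (P.ψ x - 1) * S.s (P.ψ x) :=
      mul_le_mul_of_nonneg_left hsd hnn
    calc (P.ψ x - 1) * S.d * S.g (P.ψ x)
        ≤ (P.ψ x - 1) * S.s (P.ψ x) * S.g (P.ψ x) :=
          mul_le_mul_of_nonneg_right ha hg.le
    _ ≤ (P.ψ x - 1) * S.s (P.ψ x) * (S.xu * P.β ^ (S.kn - 1)) :=
          mul_le_mul_of_nonneg_left hgle (mul_nonneg hnn hspos.le)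
  have e4 : -(P.crate * (P.ψ x - 1)) * (S.xu * P.β ^ (S.kn - 1) * S.g (P.ψ x))
      = -((P.ψ x - 1) * S.d * S.g (P.ψ x)) := by
    rw [← hcancel]; ring
  have e5 : deriv P.ψ x * x * (S.xu * P.β ^ (S.kn - 1) * S.g (P.ψ x))
      = -((P.ψ x - 1) * S.s (P.ψ x)) * (S.xu * P.β ^ (S.kn - 1)) := by
    linear_combination (S.xu * P.β ^ (S.kn - 1)) * hid
  linarith

lemma ub1 : ∀ r : ℝ, 1 ≤ r → (P.ψ r - 1) * r ^ P.crate ≤ P.β - 1 := by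
  have hmono : AntitoneOn (fun r => (P.ψ r - 1) * r ^ P.crate) (Set.Ici 1) := by
    apply antitoneOn_of_deriv_nonpos (convex_Ici 1) (P.aux_contOn P.crate le_rfl)
    · intro x hx
      rw [interior_Ici, Set.mem_Ioi] at hx
      exact ((P.aux_hasDeriv P.crate hx).differentiableAt).differentiableWithinAt
    · intro x hx
      rw [interior_Ici, Set.mem_Ioi] at hx
      rw [(P.aux_hasDeriv P.crate hx).deriv]
      have hxpos : (0:ℝ) < x := by linarith
      have ht1 := P.one_le x hx.le
      have hkey := P.deriv_le hx
      have hcpos := P.crate_pos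
      have e1 : x ^ (P.crate - 1) * x = x ^ P.crate := by
        rw [← Real.rpow_add_one (ne_of_gt hxpos)]; ring_nf
      have hA1 : (0:ℝ) < x ^ (P.crate - 1) := Real.rpow_pos_of_pos hxpos _
      have e3 : deriv P.ψ x * x ^ P.crate = (deriv P.ψ x * x) * x ^ (P.crate - 1) := by
        rw [← e1]; ring
      nlinarith [mul_le_mul_of_nonneg_right hkey hA1.le, e3]
  intro r hr
  have h := hmono (Set.self_mem_Ici) hr hr
  simp only [P.hinit, Real.one_rpow, mul_one] at h
  exact h

lemma ub1' : ∀ r : ℝ, 1 ≤ r → P.ψ r - 1 ≤ (P.β - 1) * r ^ (-P.crate) := by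
  intro r hr
  have h := P.ub1 r hr
  have hrpos : (0:ℝ) < r := by linarith
  have hpos : (0:ℝ) < r ^ P.crate := Real.rpow_pos_of_pos hrpos _
  have hneg : (0:ℝ) < r ^ (-P.crate) := Real.rpow_pos_of_pos hrpos _
  have hmul : r ^ P.crate * r ^ (-P.crate) = 1 := by
    rw [← Real.rpow_add hrpos]; simp
  have e : (P.ψ r - 1) * r ^ P.crate * r ^ (-P.crate) = P.ψ r - 1 := by
    rw [mul_assoc, hmul, mul_one]
  nlinarith [mul_le_mul_of_nonneg_right h hneg.le, e]

lemma exists_r0 : ∃ r₀ : ℝ, 1 ≤ r₀ ∧ ∀ r, r₀ ≤ r → P.ψ r ≤ 2 := by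
  have hc := P.crate_pos
  have htend : Tendsto (fun r : ℝ => (P.β - 1) * r ^ (-P.crate)) atTop (nhds 0) := by
    have := (tendsto_rpow_neg_atTop hc).const_mul (P.β - 1)
    simpa using this
  have hev : ∀ᶠ r in atTop, (P.β - 1) * r ^ (-P.crate) ≤ 1 := by
    filter_upwards [htend.eventually (eventually_le_nhds (by norm_num : (0:ℝ) < 1))] with r hr
    exact hr
  obtain ⟨r₀, hr₀⟩ := (hev.and (eventually_ge_atTop (1:ℝ))).exists_forall_of_atTop
  refine ⟨max r₀ 1, le_max_right _ _, fun r hr => ?_⟩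
  have hr1 : (1:ℝ) ≤ r := le_trans (le_max_right _ _) hr
  have := P.ub1' r hr1
  have := (hr₀ r (le_trans (le_max_left _ _) hr)).1
  linarith

lemma decay : ∃ r₀ K : ℝ, 1 ≤ r₀ ∧ 0 ≤ K ∧
    ∀ r, r₀ ≤ r → (P.ψ r - 1) * r ^ S.m ≤ K := by
  obtain ⟨r₀, hr₀1, hr₀⟩ := P.exists_r0
  have hc := P.crate_pos
  set c := P.crate with hcdef
  set B₂ := S.C0 * (P.β - 1) / c with hB₂def
  have hB₂ : 0 ≤ B₂ := by
    have := S.C0_nonneg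
    have := P.hβ
    apply div_nonneg _ hc.le
    nlinarith
  have hB₂c : B₂ * c = S.C0 * (P.β - 1) := div_mul_cancel₀ _ (ne_of_gt hc)
  set w : ℝ → ℝ := fun r => (P.ψ r - 1) * r ^ S.m * Real.exp (B₂ * r ^ (-c)) with hwdef
  have hwderiv : ∀ x : ℝ, r₀ < x → HasDerivAt w
      ((deriv P.ψ x * x ^ S.m + (P.ψ x - 1) * (S.m * x ^ (S.m - 1))) * Real.exp (B₂ * x ^ (-c))
        + ((P.ψ x - 1) * x ^ S.m) * (Real.exp (B₂ * x ^ (-c)) * (B₂ * (-c * x ^ (-c - 1))))) x := by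
    intro x hx
    have hx1 : 1 < x := lt_of_le_of_lt hr₀1 hx
    have hxne : x ≠ 0 := by positivity
    have hE : HasDerivAt (fun r : ℝ => Real.exp (B₂ * r ^ (-c)))
        (Real.exp (B₂ * x ^ (-c)) * (B₂ * (-c * x ^ (-c - 1)))) x := by
      have h1 : HasDerivAt (fun r : ℝ => r ^ (-c)) (-c * x ^ (-c - 1)) x :=
        Real.hasDerivAt_rpow_const (Or.inl hxne)
      exact (h1.const_mul B₂).exp
    exact (P.aux_hasDeriv S.m hx1).mul hE
  have hwanti : AntitoneOn w (Set.Ici r₀) := by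
    apply antitoneOn_of_deriv_nonpos (convex_Ici r₀)
    · apply ContinuousOn.mul (P.aux_contOn S.m hr₀1)
      intro x hx
      have hx1 : (1:ℝ) ≤ x := le_trans hr₀1 hx
      have hxne : x ≠ 0 := by intro h; rw [h] at hx1; norm_num at hx1
      exact (Real.continuous_exp.continuousAt.comp
        (continuousAt_const.mul
          (Real.continuousAt_rpow_const x (-c) (Or.inl hxne)))).continuousWithinAt
    · intro x hx
      rw [interior_Ici, Set.mem_Ioi] at hx
      exact (hwderiv x hx).differentiableAt.differentiableWithinAt
    · intro x hx
      rw [interior_Ici, Set.mem_Ioi] at hx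
      rw [(hwderiv x hx).deriv]
      have hx1 : 1 < x := lt_of_le_of_lt hr₀1 hx
      have hxpos : (0:ℝ) < x := by linarith
      have ht1 := P.one_le x hx1.le
      have ht2 : P.ψ x ≤ 2 := hr₀ x hx.le
      have hid := P.ode2 hx1
      have hg := S.g_pos ht1
      have hsl := S.sharp_lower ht1 ht2
      -- sharp derivative bound : deriv * x ≤ -((m - C0(t-1))(t-1))
      have key3 : deriv P.ψ x * x ≤ -((S.m - S.C0 * (P.ψ x - 1)) * (P.ψ x - 1)) := by
        apply le_of_mul_le_mul_right _ hg
        nlinarith [mul_le_mul_of_nonneg_left hsl (by linarith : (0:ℝ) ≤ P.ψ x - 1)]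
      have hub := P.ub1' x hx1.le
      have hC0 := S.C0_nonneg
      set t := P.ψ x
      set E := Real.exp (B₂ * x ^ (-c)) with hEdef
      have hEpos : 0 < E := Real.exp_pos _
      have hA1 : (0:ℝ) < x ^ (S.m - 1) := Real.rpow_pos_of_pos hxpos _
      have hXc : (0:ℝ) < x ^ (-c) := Real.rpow_pos_of_pos hxpos _
      have e1 : x ^ S.m = x ^ (S.m - 1) * x := by
        rw [← Real.rpow_add_one (ne_of_gt hxpos)]; ring_nf
      have e2 : x ^ (-c - 1) * x = x ^ (-c) := by
        rw [← Real.rpow_add_one (ne_of_gt hxpos)]; ring_nf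
      -- bound each piece
      have hfrac : S.C0 * (t - 1) ≤ B₂ * c * x ^ (-c) := by
        rw [hB₂c]
        nlinarith
      have hterm : (t - 1) * (S.C0 * (t - 1) - B₂ * c * x ^ (-c)) ≤ 0 := by
        nlinarith
      have hD : deriv P.ψ x * x ≤ -(S.m * (t - 1)) + S.C0 * (t - 1) * (t - 1) := by
        nlinarith [key3]
      rw [e1]
      have expand : (deriv P.ψ x * (x ^ (S.m - 1) * x) + (t - 1) * (S.m * x ^ (S.m - 1))) * E
          + ((t - 1) * (x ^ (S.m - 1) * x)) * (E * (B₂ * (-c * x ^ (-c - 1))))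
          = E * x ^ (S.m - 1) * ((deriv P.ψ x * x) + (t - 1) * S.m
              - (t - 1) * (B₂ * c) * (x ^ (-c - 1) * x)) := by ring
      rw [expand, e2]
      have hinner : (deriv P.ψ x * x) + (t - 1) * S.m - (t - 1) * (B₂ * c) * x ^ (-c) ≤ 0 := by
        nlinarith
      have hEA : 0 < E * x ^ (S.m - 1) := mul_pos hEpos hA1
      exact mul_nonpos_of_nonneg_of_nonpos hEA.le hinner
  refine ⟨r₀, w r₀, hr₀1, ?_, ?_⟩
  · have h1 := P.one_le r₀ hr₀1
    have h2 : (0:ℝ) < r₀ ^ S.m := Real.rpow_pos_of_pos (by linarith) _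
    have h3 : (0:ℝ) < Real.exp (B₂ * r₀ ^ (-c)) := Real.exp_pos _
    show (0:ℝ) ≤ (P.ψ r₀ - 1) * r₀ ^ S.m * Real.exp (B₂ * r₀ ^ (-c))
    have h4 : (0:ℝ) ≤ P.ψ r₀ - 1 := by linarith
    exact mul_nonneg (mul_nonneg h4 h2.le) h3.le
  · intro r hr
    have hmem : r ∈ Set.Ici r₀ := hr
    have hle := hwanti (Set.self_mem_Ici) hmem hr
    have h1 := P.one_le r (le_trans hr₀1 hr)
    have hrpos : (0:ℝ) < r := by linarith [le_trans hr₀1 hr]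
    have hEge : 1 ≤ Real.exp (B₂ * r ^ (-c)) := by
      apply Real.one_le_exp
      positivity
    have h2 : (0:ℝ) ≤ (P.ψ r - 1) * r ^ S.m := by
      have := Real.rpow_pos_of_pos hrpos S.m
      nlinarith
    calc (P.ψ r - 1) * r ^ S.m ≤ (P.ψ r - 1) * r ^ S.m * Real.exp (B₂ * r ^ (-c)) := by
          nlinarith
    _ ≤ w r₀ := hle


lemma integrand_contOn {a : ℝ} (ha : 1 ≤ a) :
    ContinuousOn (fun τ => τ * (P.ψ τ - 1)) (Set.Ici a) :=
  continuous_id.continuousOn.mul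
    ((P.hcont.mono (Ici_subset_Ici.2 ha)).sub continuousOn_const)

lemma integrand_nonneg {τ : ℝ} (h : 1 ≤ τ) : 0 ≤ τ * (P.ψ τ - 1) :=
  mul_nonneg (by linarith) (by linarith [P.one_le τ h])

lemma integrand_le {r₀ K τ : ℝ} (hr₀1 : 1 ≤ r₀)
    (hdec : ∀ r, r₀ ≤ r → (P.ψ r - 1) * r ^ S.m ≤ K) (hτ : r₀ ≤ τ) :
    τ * (P.ψ τ - 1) ≤ K * τ ^ (1 - S.m) := by
  have hτ1 : (1:ℝ) ≤ τ := le_trans hr₀1 hτ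
  have hτpos : (0:ℝ) < τ := by linarith
  have hid : τ ^ S.m * τ ^ (1 - S.m) = τ := by
    rw [← Real.rpow_add hτpos]
    have : S.m + (1 - S.m) = 1 := by ring
    rw [this, Real.rpow_one]
  have h2 : τ * (P.ψ τ - 1) = ((P.ψ τ - 1) * τ ^ S.m) * τ ^ (1 - S.m) := by
    rw [mul_assoc, hid]; ring
  rw [h2]
  exact mul_le_mul_of_nonneg_right (hdec τ hτ) (Real.rpow_pos_of_pos hτpos _).le

lemma integrableOn {R : ℝ} (hR : 1 ≤ R) :
    MeasureTheory.IntegrableOn (fun τ => τ * (P.ψ τ - 1)) (Set.Ioi R) := by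
  obtain ⟨r₀, K, hr₀1, hK, hdec⟩ := P.decay
  set T := max R r₀ with hT
  have hRT : R ≤ T := le_max_left _ _
  have hr₀T : r₀ ≤ T := le_max_right _ _
  have hT1 : (1:ℝ) ≤ T := le_trans hR hRT
  have hTpos : (0:ℝ) < T := by linarith
  have hm := S.two_lt_m
  have h1 : MeasureTheory.IntegrableOn (fun τ => τ * (P.ψ τ - 1)) (Set.Ioc R T) := by
    have hicc : MeasureTheory.IntegrableOn (fun τ => τ * (P.ψ τ - 1)) (Set.Icc R T) :=
      ((P.integrand_contOn le_rfl).mono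
        (Icc_subset_Ici_self.trans (Ici_subset_Ici.2 hR))).integrableOn_Icc
    exact hicc.mono_set Ioc_subset_Icc_self
  have hmaj : MeasureTheory.IntegrableOn (fun τ => K * τ ^ (1 - S.m)) (Set.Ioi T) :=
    (integrableOn_Ioi_rpow_of_lt (by linarith) hTpos).const_mul K
  have h2 : MeasureTheory.IntegrableOn (fun τ => τ * (P.ψ τ - 1)) (Set.Ioi T) := by
    refine MeasureTheory.Integrable.mono hmaj
      (((P.integrand_contOn hT1).mono Ioi_subset_Ici_self).aestronglyMeasurable
        measurableSet_Ioi) ?_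
    rw [MeasureTheory.ae_restrict_iff' measurableSet_Ioi]
    filter_upwards with τ
    intro hτ
    rw [Set.mem_Ioi] at hτ
    have hτ1 : (1:ℝ) ≤ τ := le_trans hT1 hτ.le
    rw [Real.norm_of_nonneg (P.integrand_nonneg hτ1)]
    calc τ * (P.ψ τ - 1) ≤ K * τ ^ (1 - S.m) :=
          P.integrand_le hr₀1 hdec (le_trans hr₀T hτ.le)
    _ ≤ ‖K * τ ^ (1 - S.m)‖ := le_abs_self _
  have := h1.union h2
  rwa [Set.Ioc_union_Ioi_eq_Ioi hRT] at this

lemma integral_nonneg {R : ℝ} (hR : 1 ≤ R) :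
    0 ≤ ∫ τ in Set.Ioi R, τ * (P.ψ τ - 1) :=
  MeasureTheory.setIntegral_nonneg measurableSet_Ioi
    (fun τ hτ => P.integrand_nonneg (le_trans hR (le_of_lt hτ)))

lemma integral_lb {R : ℝ} (hR : 1 ≤ R) :
    (P.β - 1) * R ^ (2 - S.m) / (S.m - 2) ≤ ∫ τ in Set.Ioi R, τ * (P.ψ τ - 1) := by
  have hm := S.two_lt_m
  have hRpos : (0:ℝ) < R := by linarith
  have hβ := P.hβ
  have hint1 : MeasureTheory.IntegrableOn (fun τ => (P.β - 1) * τ ^ (1 - S.m)) (Set.Ioi R) :=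
    (integrableOn_Ioi_rpow_of_lt (by linarith) hRpos).const_mul _
  have hmono : (∫ τ in Set.Ioi R, (P.β - 1) * τ ^ (1 - S.m))
      ≤ ∫ τ in Set.Ioi R, τ * (P.ψ τ - 1) := by
    apply MeasureTheory.setIntegral_mono_on hint1 (P.integrableOn hR) measurableSet_Ioi
    intro τ hτ
    rw [Set.mem_Ioi] at hτ
    have hτ1 : (1:ℝ) ≤ τ := le_trans hR hτ.le
    have hτpos : (0:ℝ) < τ := by linarith
    have hlb := P.lb τ hτ1
    have hpow : (0:ℝ) < τ ^ (1 - S.m) := Real.rpow_pos_of_pos hτpos _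
    have hid : τ ^ S.m * τ ^ (1 - S.m) = τ := by
      rw [← Real.rpow_add hτpos]
      have : S.m + (1 - S.m) = 1 := by ring
      rw [this, Real.rpow_one]
    have h2 : τ * (P.ψ τ - 1) = ((P.ψ τ - 1) * τ ^ S.m) * τ ^ (1 - S.m) := by
      rw [mul_assoc, hid]; ring
    rw [h2]
    exact mul_le_mul_of_nonneg_right hlb hpow.le
  have hval : (∫ τ in Set.Ioi R, (P.β - 1) * τ ^ (1 - S.m))
      = (P.β - 1) * R ^ (2 - S.m) / (S.m - 2) := by
    rw [MeasureTheory.integral_const_mul, integral_Ioi_rpow_of_lt (by linarith) hRpos]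
    have he : 1 - S.m + 1 = 2 - S.m := by ring
    rw [he]
    have h1 : S.m - 2 ≠ 0 := by linarith
    have h2 : 1 - S.m + 1 ≠ 0 := by intro h; rw [he] at h; apply h1; linarith
    rw [he] at h2
    field_simp
    ring
  rw [hval] at hmono
  exact hmono

lemma tail_ub : ∃ r₀ C : ℝ, 1 ≤ r₀ ∧ 0 ≤ C ∧ ∀ R, r₀ ≤ R →
    (∫ τ in Set.Ioi R, τ * (P.ψ τ - 1)) ≤ C * R ^ (2 - S.m) := by
  obtain ⟨r₀, K, hr₀1, hK, hdec⟩ := P.decay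
  have hm := S.two_lt_m
  refine ⟨r₀, K / (S.m - 2), hr₀1, div_nonneg hK (by linarith), fun R hR => ?_⟩
  have hR1 : (1:ℝ) ≤ R := le_trans hr₀1 hR
  have hRpos : (0:ℝ) < R := by linarith
  have hmaj : MeasureTheory.IntegrableOn (fun τ => K * τ ^ (1 - S.m)) (Set.Ioi R) :=
    (integrableOn_Ioi_rpow_of_lt (by linarith) hRpos).const_mul K
  have hmono : (∫ τ in Set.Ioi R, τ * (P.ψ τ - 1))
      ≤ ∫ τ in Set.Ioi R, K * τ ^ (1 - S.m) := by
    apply MeasureTheory.setIntegral_mono_on (P.integrableOn hR1) hmaj measurableSet_Ioi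
    intro τ hτ
    rw [Set.mem_Ioi] at hτ
    exact P.integrand_le hr₀1 hdec (le_trans hR hτ.le)
  have hval : (∫ τ in Set.Ioi R, K * τ ^ (1 - S.m)) = K / (S.m - 2) * R ^ (2 - S.m) := by
    rw [MeasureTheory.integral_const_mul, integral_Ioi_rpow_of_lt (by linarith) hRpos]
    have he : 1 - S.m + 1 = 2 - S.m := by ring
    rw [he]
    have h1 : S.m - 2 ≠ 0 := by linarith
    have h2 : 2 - S.m ≠ 0 := by intro h; apply h1; linarith
    field_simp
    ring
  rw [hval] at hmono
  exact hmono


lemma deriv_eq {x : ℝ} (hx : 1 < x) : deriv P.ψ x = -(S.Fq (P.ψ x)) / x := by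
  have ht1 := P.one_le x hx.le
  have hg := S.g_pos ht1
  have hid := P.ode2 hx
  have hxne : x ≠ 0 := ne_of_gt (by linarith)
  have hgne : S.g (P.ψ x) ≠ 0 := ne_of_gt hg
  simp only [St.Fq]
  rw [← neg_div, div_div, eq_div_iff (mul_ne_zero hgne hxne)]
  linear_combination hid

lemma gronwall' (P Q : Sol S) {B L : ℝ} (hB : 1 ≤ B) (hPB : P.β ≤ B) (hQB : Q.β ≤ B)
    (hL0 : 0 ≤ L)
    (hLip : ∀ t1 t2, t1 ∈ Set.Icc 1 B → t2 ∈ Set.Icc 1 B →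
      |S.Fq t1 - S.Fq t2| ≤ L * |t1 - t2|) :
    (∀ r, 1 ≤ r → |P.ψ r - Q.ψ r| ≤ |P.β - Q.β| * Real.exp (L * (r - 1))) ∧
    (∀ r, 1 ≤ r → |P.β - Q.β| ≤ |P.ψ r - Q.ψ r| * Real.exp (L * (r - 1))) := by
  have hv : ∀ x : ℝ, 1 < x → HasDerivAt (fun r => P.ψ r - Q.ψ r)
      (deriv P.ψ x - deriv Q.ψ x) x :=
    fun x hx => (P.hdiff hx).hasDerivAt.sub (Q.hdiff hx).hasDerivAt
  have hvb : ∀ x : ℝ, 1 < x →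
      |deriv P.ψ x - deriv Q.ψ x| ≤ L * |P.ψ x - Q.ψ x| := by
    intro x hx
    have hxpos : (0:ℝ) < x := by linarith
    rw [P.deriv_eq hx, Q.deriv_eq hx]
    have hmem1 : P.ψ x ∈ Set.Icc 1 B :=
      ⟨P.one_le x hx.le, le_trans (P.le_beta hx.le) hPB⟩
    have hmem2 : Q.ψ x ∈ Set.Icc 1 B :=
      ⟨Q.one_le x hx.le, le_trans (Q.le_beta hx.le) hQB⟩
    have hlip := hLip (P.ψ x) (Q.ψ x) hmem1 hmem2
    have e : -S.Fq (P.ψ x) / x - -S.Fq (Q.ψ x) / x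
        = (S.Fq (Q.ψ x) - S.Fq (P.ψ x)) / x := by ring
    rw [e, abs_div, abs_of_pos hxpos, abs_sub_comm, div_le_iff₀ hxpos]
    have hnn : 0 ≤ L * |P.ψ x - Q.ψ x| := mul_nonneg hL0 (abs_nonneg _)
    nlinarith [mul_le_mul_of_nonneg_left (by linarith : (1:ℝ) ≤ x) hnn]
  have hsqb : ∀ x : ℝ, 1 < x →
      (P.ψ x - Q.ψ x) * (deriv P.ψ x - deriv Q.ψ x) ≤ L * (P.ψ x - Q.ψ x) ^ 2 := by
    intro x hx
    have h1 := le_abs_self ((P.ψ x - Q.ψ x) * (deriv P.ψ x - deriv Q.ψ x))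
    rw [abs_mul] at h1
    have h2 := mul_le_mul_of_nonneg_left (hvb x hx) (abs_nonneg (P.ψ x - Q.ψ x))
    have h3 := sq_abs (P.ψ x - Q.ψ x)
    nlinarith
  -- two auxiliary monotone quantities
  refine ⟨?_, ?_⟩
  · -- forward estimate
    intro r hr
    set Z : ℝ → ℝ := fun r => (P.ψ r - Q.ψ r) ^ 2 * Real.exp (-(2 * L) * (r - 1)) with hZdef
    have hZd : ∀ x : ℝ, 1 < x → HasDerivAt Z
        ((2 * (P.ψ x - Q.ψ x) * (deriv P.ψ x - deriv Q.ψ x)) * Real.exp (-(2 * L) * (x - 1))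
          + (P.ψ x - Q.ψ x) ^ 2 * (Real.exp (-(2 * L) * (x - 1)) * -(2 * L))) x := by
      intro x hx
      have hsq : HasDerivAt (fun r => (P.ψ r - Q.ψ r) ^ 2)
          (2 * (P.ψ x - Q.ψ x) * (deriv P.ψ x - deriv Q.ψ x)) x := by
        have := (hv x hx).pow 2
        refine this.congr_deriv ?_
        push_cast
        ring
      have hlin : HasDerivAt (fun r : ℝ => -(2 * L) * (r - 1)) (-(2 * L)) x := by
        have := ((hasDerivAt_id x).sub_const 1).const_mul (-(2 * L))
        refine this.congr_deriv ?_
        ring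
      exact hsq.mul hlin.exp
    have hanti : AntitoneOn Z (Set.Ici 1) := by
      apply antitoneOn_of_deriv_nonpos (convex_Ici 1)
      · exact ((P.hcont.sub Q.hcont).pow 2).mul
          (Real.continuous_exp.comp (continuous_const.mul
            (continuous_id.sub continuous_const))).continuousOn
      · intro x hx
        rw [interior_Ici, Set.mem_Ioi] at hx
        exact (hZd x hx).differentiableAt.differentiableWithinAt
      · intro x hx
        rw [interior_Ici, Set.mem_Ioi] at hx
        rw [(hZd x hx).deriv]
        have hE := Real.exp_pos (-(2 * L) * (x - 1))
        nlinarith [hsqb x hx]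
    have hZr := hanti (Set.self_mem_Ici) hr hr
    have hZ1 : Z 1 = (P.β - Q.β) ^ 2 := by
      simp only [hZdef, P.hinit, Q.hinit, sub_self, mul_zero, Real.exp_zero, mul_one]
    rw [hZ1] at hZr
    simp only [hZdef] at hZr
    -- convert to the desired estimate
    have hEsq : Real.exp (-(2 * L) * (r - 1)) * (Real.exp (L * (r - 1))) ^ 2 = 1 := by
      rw [pow_two, ← Real.exp_add, ← Real.exp_add,
        show -(2 * L) * (r - 1) + (L * (r - 1) + L * (r - 1)) = 0 by ring, Real.exp_zero]
    have hmul := mul_le_mul_of_nonneg_right hZr (sq_nonneg (Real.exp (L * (r - 1))))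
    have e2 : (P.ψ r - Q.ψ r) ^ 2 * (Real.exp (-(2 * L) * (r - 1))
        * (Real.exp (L * (r - 1))) ^ 2) = (P.ψ r - Q.ψ r) ^ 2 := by
      rw [hEsq, mul_one]
    have hsq2 : (P.ψ r - Q.ψ r) ^ 2 ≤ (|P.β - Q.β| * Real.exp (L * (r - 1))) ^ 2 := by
      rw [mul_pow, sq_abs]
      nlinarith [hmul, e2]
    exact abs_le.2 (abs_le_of_sq_le_sq' hsq2
      (mul_nonneg (abs_nonneg _) (Real.exp_pos _).le))
  · -- backward estimate
    intro r hr
    set Z : ℝ → ℝ := fun r => (P.ψ r - Q.ψ r) ^ 2 * Real.exp ((2 * L) * (r - 1)) with hZdef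
    have hZd : ∀ x : ℝ, 1 < x → HasDerivAt Z
        ((2 * (P.ψ x - Q.ψ x) * (deriv P.ψ x - deriv Q.ψ x)) * Real.exp ((2 * L) * (x - 1))
          + (P.ψ x - Q.ψ x) ^ 2 * (Real.exp ((2 * L) * (x - 1)) * (2 * L))) x := by
      intro x hx
      have hsq : HasDerivAt (fun r => (P.ψ r - Q.ψ r) ^ 2)
          (2 * (P.ψ x - Q.ψ x) * (deriv P.ψ x - deriv Q.ψ x)) x := by
        have := (hv x hx).pow 2
        refine this.congr_deriv ?_
        push_cast
        ring
      have hlin : HasDerivAt (fun r : ℝ => (2 * L) * (r - 1)) (2 * L) x := by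
        have := ((hasDerivAt_id x).sub_const 1).const_mul (2 * L)
        refine this.congr_deriv ?_
        ring
      exact hsq.mul hlin.exp
    have hmono : MonotoneOn Z (Set.Ici 1) := by
      apply monotoneOn_of_deriv_nonneg (convex_Ici 1)
      · exact ((P.hcont.sub Q.hcont).pow 2).mul
          (Real.continuous_exp.comp (continuous_const.mul
            (continuous_id.sub continuous_const))).continuousOn
      · intro x hx
        rw [interior_Ici, Set.mem_Ioi] at hx
        exact (hZd x hx).differentiableAt.differentiableWithinAt
      · intro x hx
        rw [interior_Ici, Set.mem_Ioi] at hx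
        rw [(hZd x hx).deriv]
        have hE := Real.exp_pos ((2 * L) * (x - 1))
        have h5 : -((P.ψ x - Q.ψ x) * (deriv P.ψ x - deriv Q.ψ x))
            ≤ L * (P.ψ x - Q.ψ x) ^ 2 := by
          have h1 := le_abs_self (-((P.ψ x - Q.ψ x) * (deriv P.ψ x - deriv Q.ψ x)))
          rw [abs_neg, abs_mul] at h1
          have h2 := mul_le_mul_of_nonneg_left (hvb x hx) (abs_nonneg (P.ψ x - Q.ψ x))
          have h3 := sq_abs (P.ψ x - Q.ψ x)
          nlinarith
        nlinarith
    have hZr := hmono (Set.self_mem_Ici) hr hr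
    have hZ1 : Z 1 = (P.β - Q.β) ^ 2 := by
      simp only [hZdef, P.hinit, Q.hinit, sub_self, mul_zero, Real.exp_zero, mul_one]
    rw [hZ1] at hZr
    simp only [hZdef] at hZr
    have hEsq : Real.exp ((2 * L) * (r - 1)) = (Real.exp (L * (r - 1))) ^ 2 := by
      rw [pow_two, ← Real.exp_add]
      congr 1
      ring
    have hsq2 : (P.β - Q.β) ^ 2 ≤ (|P.ψ r - Q.ψ r| * Real.exp (L * (r - 1))) ^ 2 := by
      rw [mul_pow, sq_abs]
      rw [hEsq] at hZr
      linarith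
    exact abs_le.2 (abs_le_of_sq_le_sq' hsq2
      (mul_nonneg (abs_nonneg _) (Real.exp_pos _).le))

lemma gronwall (P Q : Sol S) : ∃ L, 0 ≤ L ∧
    (∀ r, 1 ≤ r → |P.ψ r - Q.ψ r| ≤ |P.β - Q.β| * Real.exp (L * (r - 1))) ∧
    (∀ r, 1 ≤ r → |P.β - Q.β| ≤ |P.ψ r - Q.ψ r| * Real.exp (L * (r - 1))) := by
  have hB : (1:ℝ) ≤ max P.β Q.β := le_trans P.hβ (le_max_left _ _)
  obtain ⟨L, hL0, hLip⟩ := S.lipschitzFq hB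
  obtain ⟨h1, h2⟩ := gronwall' P Q hB (le_max_left _ _) (le_max_right _ _) hL0 hLip
  exact ⟨L, hL0, h1, h2⟩

lemma psi_lt (P Q : Sol S) (h : P.β < Q.β) : ∀ r, 1 ≤ r → P.ψ r < Q.ψ r := by
  obtain ⟨L, hL0, hle, hge⟩ := gronwall P Q
  have habs : 0 < |P.β - Q.β| := abs_pos.2 (sub_ne_zero.2 (ne_of_lt h))
  have hne : ∀ r, 1 ≤ r → P.ψ r ≠ Q.ψ r := by
    intro r hr heq
    have h2 := hge r hr
    rw [heq, sub_self, abs_zero, zero_mul] at h2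
    linarith
  intro r hr
  by_contra hnot
  push_neg at hnot
  have hgt : Q.ψ r < P.ψ r := lt_of_le_of_ne hnot (fun he => hne r hr he.symm)
  have hcont : ContinuousOn (fun x => P.ψ x - Q.ψ x) (Set.Icc 1 r) :=
    (P.hcont.sub Q.hcont).mono (Icc_subset_Ici_self)
  have hmem : (0:ℝ) ∈ Set.Icc (P.ψ 1 - Q.ψ 1) (P.ψ r - Q.ψ r) := by
    constructor
    · rw [P.hinit, Q.hinit]; linarith
    · linarith
  obtain ⟨c, hc, hc0⟩ := intermediate_value_Icc hr hcont hmem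
  exact hne c hc.1 (by linarith [sub_eq_zero.1 hc0])

lemma psi_le (P Q : Sol S) (h : P.β ≤ Q.β) : ∀ r, 1 ≤ r → P.ψ r ≤ Q.ψ r := by
  rcases eq_or_lt_of_le h with he | hlt
  · intro r hr
    obtain ⟨L, hL0, hle, _⟩ := gronwall P Q
    have h2 := hle r hr
    rw [he, sub_self, abs_zero, zero_mul] at h2
    have h3 : P.ψ r - Q.ψ r = 0 := abs_eq_zero.1 (le_antisymm h2 (abs_nonneg _))
    linarith
  · intro r hr
    exact (psi_lt P Q hlt r hr).le


end Sol

open Sol in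
lemma strictMono_mu (S : St) (sol : ℝ → Sol S) (hb : ∀ β, 1 ≤ β → (sol β).β = β)
    {R : ℝ} (hR : 1 ≤ R) :
    StrictMonoOn (fun β => ∫ τ in Set.Ioi R, τ * ((sol β).ψ τ - 1)) (Set.Ici 1) := by
  intro β₁ h1 β₂ h2 h12
  have h1' : (1:ℝ) ≤ β₁ := h1
  have h2' : (1:ℝ) ≤ β₂ := h2
  set P1 := sol β₁ with hP1
  set P2 := sol β₂ with hP2
  have hlt : P1.β < P2.β := by rw [hb β₁ h1', hb β₂ h2']; exact h12
  have hpsi := psi_lt P1 P2 hlt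
  have hint1 := P1.integrableOn hR
  have hint2 := P2.integrableOn hR
  show (∫ τ in Set.Ioi R, τ * (P1.ψ τ - 1)) < ∫ τ in Set.Ioi R, τ * (P2.ψ τ - 1)
  have hsub : (∫ τ in Set.Ioi R, (τ * (P2.ψ τ - 1) - τ * (P1.ψ τ - 1)))
      = (∫ τ in Set.Ioi R, τ * (P2.ψ τ - 1)) - ∫ τ in Set.Ioi R, τ * (P1.ψ τ - 1) :=
    MeasureTheory.integral_sub hint2 hint1
  have hintd : MeasureTheory.IntegrableOn
      (fun τ => τ * (P2.ψ τ - 1) - τ * (P1.ψ τ - 1)) (Set.Ioi R) := hint2.sub hint1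
  have hkey : 0 < ∫ τ in Set.Ioi R, (τ * (P2.ψ τ - 1) - τ * (P1.ψ τ - 1)) := by
    have hcontg : ContinuousOn (fun τ => τ * (P2.ψ τ - 1) - τ * (P1.ψ τ - 1))
        (Set.Icc R (R + 1)) :=
      ((P2.integrand_contOn hR).sub (P1.integrand_contOn hR)).mono Icc_subset_Ici_self
    obtain ⟨τ₀, hτ₀mem, hτ₀min⟩ :=
      isCompact_Icc.exists_isMinOn (Set.nonempty_Icc.2 (by linarith)) hcontg
    have hτ₀1 : (1:ℝ) ≤ τ₀ := le_trans hR hτ₀mem.1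
    have hηpos : 0 < τ₀ * (P2.ψ τ₀ - 1) - τ₀ * (P1.ψ τ₀ - 1) := by
      have := hpsi τ₀ hτ₀1
      nlinarith
    have hmono1 : (∫ τ in Set.Ioc R (R + 1), (τ * (P2.ψ τ - 1) - τ * (P1.ψ τ - 1)))
        ≤ ∫ τ in Set.Ioi R, (τ * (P2.ψ τ - 1) - τ * (P1.ψ τ - 1)) := by
      apply MeasureTheory.setIntegral_mono_set hintd
      · filter_upwards [MeasureTheory.ae_restrict_mem measurableSet_Ioi] with τ hτ
        rw [Set.mem_Ioi] at hτ
        have hτ1 : (1:ℝ) ≤ τ := le_trans hR hτ.le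
        have := hpsi τ hτ1
        simp only [Pi.zero_apply]
        nlinarith
      · exact HasSubset.Subset.eventuallyLE Set.Ioc_subset_Ioi_self
    have hconst : (τ₀ * (P2.ψ τ₀ - 1) - τ₀ * (P1.ψ τ₀ - 1)) *
        (MeasureTheory.volume (Set.Ioc R (R + 1))).toReal
        ≤ ∫ τ in Set.Ioc R (R + 1), (τ * (P2.ψ τ - 1) - τ * (P1.ψ τ - 1)) := by
      rw [mul_comm _ ((MeasureTheory.volume (Set.Ioc R (R + 1))).toReal), ← smul_eq_mul,
        ← measureReal_def]
      apply MeasureTheory.setIntegral_ge_of_const_le measurableSet_Ioc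
        (measure_Ioc_lt_top).ne
      · intro x hx
        exact hτ₀min (Set.Ioc_subset_Icc_self hx)
      · exact hintd.mono_set Set.Ioc_subset_Ioi_self
    have hvol : (MeasureTheory.volume (Set.Ioc R (R + 1))).toReal = 1 := by
      rw [Real.volume_Ioc, ENNReal.toReal_ofReal (by linarith)]
      ring
    rw [hvol, mul_one] at hconst
    linarith
  rw [hsub] at hkey
  linarith

open Sol in
lemma continuousOn_mu (S : St) (sol : ℝ → Sol S) (hb : ∀ β, 1 ≤ β → (sol β).β = β)
    {R : ℝ} (hR : 1 ≤ R) :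
    ContinuousOn (fun β => ∫ τ in Set.Ioi R, τ * ((sol β).ψ τ - 1)) (Set.Ici 1) := by
  intro β₀ hβ₀
  have hβ₀1 : (1:ℝ) ≤ β₀ := hβ₀
  rw [Metric.continuousWithinAt_iff]
  intro ε hε
  set B := β₀ + 1 with hBdef
  have hB1 : (1:ℝ) ≤ B := by simp only [hBdef]; linarith
  set PB := sol B with hPBdef
  have hPBβ : PB.β = B := hb B hB1
  obtain ⟨r₀, C, hr₀1, hC0, htail⟩ := PB.tail_ub
  obtain ⟨L, hL0, hLip⟩ := S.lipschitzFq hB1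
  have hm := S.two_lt_m
  have htend0 : Tendsto (fun T : ℝ => C * T ^ (2 - S.m)) atTop (nhds 0) := by
    have h1 : Tendsto (fun T : ℝ => T ^ (-(S.m - 2))) atTop (nhds 0) :=
      tendsto_rpow_neg_atTop (by linarith)
    have h2 := h1.const_mul C
    rw [mul_zero] at h2
    apply h2.congr
    intro T
    rw [show -(S.m - 2) = 2 - S.m by ring]
  have hev := (htend0.eventually_lt_const (show (0:ℝ) < ε/8 by linarith)).and
    ((eventually_ge_atTop R).and ((eventually_ge_atTop r₀).and (eventually_ge_atTop 1)))
  obtain ⟨T, hTtail, hTR, hTr₀, hT1⟩ := hev.exists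
  set EL := Real.exp (L * (T - 1)) with hELdef
  have hELpos : 0 < EL := Real.exp_pos _
  set X := T * EL * (T - R) with hXdef
  have hX0 : 0 ≤ X := by
    apply mul_nonneg (mul_nonneg (by linarith) hELpos.le) (by linarith)
  set δ := min 1 (ε / (2 * (X + 1))) with hδdef
  have hδpos : 0 < δ := lt_min one_pos (div_pos hε (by linarith))
  refine ⟨δ, hδpos, ?_⟩
  intro β hβmem hdist
  have hβ1 : (1:ℝ) ≤ β := hβmem
  rw [Real.dist_eq] at hdist
  have habsd := abs_lt.1 hdist
  have hδ1 : δ ≤ 1 := min_le_left _ _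
  have hβB : β ≤ B := by simp only [hBdef]; linarith
  set P := sol β with hPdef
  set P₀ := sol β₀ with hP₀def
  have hPβ : P.β = β := hb β hβ1
  have hP₀β : P₀.β = β₀ := hb β₀ hβ₀1
  have hgr := (gronwall' P P₀ hB1 (by rw [hPβ]; exact hβB)
    (by rw [hP₀β]; simp only [hBdef]; linarith) hL0 hLip).1
  rw [Real.dist_eq]
  have hsplit : ∀ Q : Sol S, (∫ τ in Set.Ioi R, τ * (Q.ψ τ - 1)) =
      (∫ τ in Set.Ioc R T, τ * (Q.ψ τ - 1)) + ∫ τ in Set.Ioi T, τ * (Q.ψ τ - 1) := by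
    intro Q
    rw [← MeasureTheory.setIntegral_union (Set.Ioc_disjoint_Ioi le_rfl) measurableSet_Ioi
      ((Q.integrableOn hR).mono_set Set.Ioc_subset_Ioi_self) (Q.integrableOn hT1),
      Set.Ioc_union_Ioi_eq_Ioi hTR]
  show |(∫ τ in Set.Ioi R, τ * (P.ψ τ - 1)) - ∫ τ in Set.Ioi R, τ * (P₀.ψ τ - 1)| < ε
  rw [hsplit P, hsplit P₀]
  have hint1 : MeasureTheory.IntegrableOn (fun τ => τ * (P.ψ τ - 1)) (Set.Ioc R T) :=
    (P.integrableOn hR).mono_set Set.Ioc_subset_Ioi_self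
  have hint0 : MeasureTheory.IntegrableOn (fun τ => τ * (P₀.ψ τ - 1)) (Set.Ioc R T) :=
    (P₀.integrableOn hR).mono_set Set.Ioc_subset_Ioi_self
  have hterm1 : |(∫ τ in Set.Ioc R T, τ * (P.ψ τ - 1))
      - ∫ τ in Set.Ioc R T, τ * (P₀.ψ τ - 1)| ≤ ε/2 := by
    rw [← MeasureTheory.integral_sub hint1 hint0]
    have hb1 : ‖∫ τ in Set.Ioc R T, (τ * (P.ψ τ - 1) - τ * (P₀.ψ τ - 1))‖
        ≤ (T * (δ * EL)) * (MeasureTheory.volume (Set.Ioc R T)).toReal := by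
      apply MeasureTheory.norm_setIntegral_le_of_norm_le_const measure_Ioc_lt_top
      intro x hx
      have hx1 : (1:ℝ) ≤ x := le_trans hR hx.1.le
      have hxT : x ≤ T := hx.2
      have hgb := hgr x hx1
      rw [hPβ, hP₀β] at hgb
      have hexp : Real.exp (L * (x - 1)) ≤ EL := by
        rw [hELdef]
        apply Real.exp_le_exp.2
        nlinarith
      have hstep : |P.ψ x - P₀.ψ x| ≤ δ * EL := by
        calc |P.ψ x - P₀.ψ x| ≤ |β - β₀| * Real.exp (L * (x - 1)) := hgb
        _ ≤ δ * EL := by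
            apply mul_le_mul hdist.le hexp (Real.exp_pos _).le hδpos.le
      rw [Real.norm_eq_abs,
        show x * (P.ψ x - 1) - x * (P₀.ψ x - 1) = x * (P.ψ x - P₀.ψ x) by ring,
        abs_mul, abs_of_nonneg (by linarith : (0:ℝ) ≤ x)]
      apply mul_le_mul hxT hstep (abs_nonneg _) (by linarith)
    have hvol : (MeasureTheory.volume (Set.Ioc R T)).toReal = T - R := by
      rw [Real.volume_Ioc, ENNReal.toReal_ofReal (by linarith)]
    rw [hvol, Real.norm_eq_abs] at hb1
    have hδ2 : δ ≤ ε / (2 * (X + 1)) := min_le_right _ _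
    have h3 : δ * (2 * (X + 1)) ≤ ε := by
      rw [← le_div_iff₀ (by linarith : (0:ℝ) < 2 * (X + 1))]
      exact hδ2
    have h4 : T * (δ * EL) * (T - R) = X * δ := by rw [hXdef]; ring
    rw [h4] at hb1
    nlinarith
  have htail2 : ∀ Q : Sol S, Q.β ≤ B → 1 ≤ Q.β →
      0 ≤ (∫ τ in Set.Ioi T, τ * (Q.ψ τ - 1)) ∧
      (∫ τ in Set.Ioi T, τ * (Q.ψ τ - 1)) < ε/8 := by
    intro Q hQB hQ1
    refine ⟨Q.integral_nonneg hT1, ?_⟩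
    have hmon : (∫ τ in Set.Ioi T, τ * (Q.ψ τ - 1))
        ≤ ∫ τ in Set.Ioi T, τ * (PB.ψ τ - 1) := by
      apply MeasureTheory.setIntegral_mono_on (Q.integrableOn hT1) (PB.integrableOn hT1)
        measurableSet_Ioi
      intro x hx
      rw [Set.mem_Ioi] at hx
      have hx1 : (1:ℝ) ≤ x := le_trans hT1 hx.le
      have hcomp := psi_le Q PB (by rw [hPBβ]; exact hQB) x hx1
      nlinarith
    have := htail T hTr₀
    linarith
  have h2P := htail2 P (by rw [hPβ]; exact hβB) (by rw [hPβ]; exact hβ1)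
  have h2P₀ := htail2 P₀ (by rw [hP₀β]; simp only [hBdef]; linarith)
    (by rw [hP₀β]; exact hβ₀1)
  have e : ((∫ τ in Set.Ioc R T, τ * (P.ψ τ - 1)) + ∫ τ in Set.Ioi T, τ * (P.ψ τ - 1))
      - ((∫ τ in Set.Ioc R T, τ * (P₀.ψ τ - 1)) + ∫ τ in Set.Ioi T, τ * (P₀.ψ τ - 1))
      = ((∫ τ in Set.Ioc R T, τ * (P.ψ τ - 1)) - ∫ τ in Set.Ioc R T, τ * (P₀.ψ τ - 1))
      + ((∫ τ in Set.Ioi T, τ * (P.ψ τ - 1)) - ∫ τ in Set.Ioi T, τ * (P₀.ψ τ - 1)) := by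
    ring
  rw [e]
  have habs := abs_add_le
    ((∫ τ in Set.Ioc R T, τ * (P.ψ τ - 1)) - ∫ τ in Set.Ioc R T, τ * (P₀.ψ τ - 1))
    ((∫ τ in Set.Ioi T, τ * (P.ψ τ - 1)) - ∫ τ in Set.Ioi T, τ * (P₀.ψ τ - 1))
  have hb2 : |(∫ τ in Set.Ioi T, τ * (P.ψ τ - 1)) - ∫ τ in Set.Ioi T, τ * (P₀.ψ τ - 1)|
      < ε/4 := by
    apply abs_lt.2
    constructor
    · linarith [h2P.1, h2P.2, h2P₀.1, h2P₀.2]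
    · linarith [h2P.1, h2P.2, h2P₀.1, h2P₀.2]
  linarith

end MuAux

lemma xiInf_nonneg_aux (n : ℕ) (hn : 3 ≤ n) (l : ℤ) (a : Fin n → ℝ) (ha : ∀ i, 0 < a i) :
    0 ≤ xiInf n l a := by
  apply le_csInf
  · refine ⟨Xi n l a (fun _ => 1), fun _ => 1, ?_, rfl⟩
    intro h
    have h2 := congrFun h (⟨0, by omega⟩ : Fin n)
    simp only [Pi.zero_apply] at h2
    norm_num at h2
  · rintro y ⟨x, hx, rfl⟩
    unfold Xi
    apply div_nonneg
    · apply Finset.sum_nonneg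
      intro i _
      have h1 : 0 ≤ esymmDel n (l - 1) i a := by
        unfold esymmDel
        split
        · exact Finset.sum_nonneg fun s _ => Finset.prod_nonneg fun j _ => (ha j).le
        · exact le_refl 0
      exact mul_nonneg (mul_nonneg h1 (sq_nonneg _)) (sq_nonneg _)
    · apply mul_nonneg
      · unfold esymm
        split
        · exact Finset.sum_nonneg fun s _ => Finset.prod_nonneg fun j _ => (ha j).le
        · exact le_refl 0
      · exact Finset.sum_nonneg fun i _ => mul_nonneg (ha i).le (sq_nonneg _)

lemma xiInf_lt_xiSup_aux (n : ℕ) (k l : ℤ) (hlk : l < k) (a : Fin n → ℝ)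
    (hm : 2 < mkl n k l a) : xiInf n l a < xiSup n k a := by
  by_contra hle
  push_neg at hle
  unfold mkl at hm
  have hd : (0:ℝ) < (k:ℝ) - l := by
    have h1 : ((l:ℝ)) + 1 ≤ (k:ℝ) := by exact_mod_cast hlk
    linarith
  rcases eq_or_lt_of_le hle with he | hlt
  · rw [← he, sub_self, div_zero] at hm
    linarith
  · have hneg : xiSup n k a - xiInf n l a < 0 := by linarith
    have := div_neg_of_pos_of_neg hd hneg
    linarith

/-- **Corollary 3.2.** Properties of `μ_R(β) := ∫_R^∞ τ(ψ(τ,β) - 1) dτ`: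
convergence and nonnegativity, continuity and strict monotonicity in `β`,
the lower bound `μ_R(β) ≥ (β-1)R^{2-m}/(m-2)` (hence `μ_R(β) → +∞` as
`β → +∞`), and `μ_R(β) = O(R^{-m+2})` as `R → +∞`. -/
theorem mu_properties
    (n : ℕ) (hn : 3 ≤ n) (k l : ℤ) (hl : 0 ≤ l) (hlk : l < k) (hkn : k ≤ (n : ℤ))
    (a : Fin n → ℝ) (ha : ∀ i, 0 < a i)
    (hσ : esymm n k a = esymm n l a)
    (hm : 2 < mkl n k l a) (hmn : mkl n k l a ≤ (n : ℝ))
    (Ψ : ℝ → ℝ → ℝ)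
    (hΨ : ∀ β : ℝ, 1 ≤ β → SolvesODE n k l a β (fun r => Ψ r β)) :
    (∀ R β : ℝ, 1 ≤ R → 1 ≤ β →
      MeasureTheory.IntegrableOn (fun τ => τ * (Ψ τ β - 1)) (Set.Ioi R) ∧
      0 ≤ ∫ τ in Set.Ioi R, τ * (Ψ τ β - 1)) ∧
    (∀ R : ℝ, 1 ≤ R →
      ContinuousOn (fun β => ∫ τ in Set.Ioi R, τ * (Ψ τ β - 1)) (Set.Ici 1) ∧
      StrictMonoOn (fun β => ∫ τ in Set.Ioi R, τ * (Ψ τ β - 1)) (Set.Ici 1)) ∧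
    (∀ R β : ℝ, 1 ≤ R → 1 ≤ β →
      (β - 1) * R ^ (2 - mkl n k l a) / (mkl n k l a - 2)
        ≤ ∫ τ in Set.Ioi R, τ * (Ψ τ β - 1)) ∧
    (∀ R : ℝ, 1 ≤ R →
      Filter.Tendsto (fun β => ∫ τ in Set.Ioi R, τ * (Ψ τ β - 1))
        Filter.atTop Filter.atTop) ∧
    (∀ β : ℝ, 1 ≤ β → ∃ C R₀ : ℝ, ∀ R : ℝ, R₀ ≤ R →
      R ^ (mkl n k l a - 2) * (∫ τ in Set.Ioi R, τ * (Ψ τ β - 1)) ≤ C) := by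
  have hxl0 : 0 ≤ xiInf n l a := xiInf_nonneg_aux n hn l a ha
  have hltx : xiInf n l a < xiSup n k a := xiInf_lt_xiSup_aux n k l hlk a hm
  set S : MuAux.St := ⟨k, l, hl, hlk, xiSup n k a, xiInf n l a, hxl0, hltx, hm⟩ with hSdef
  have hSm : S.m = mkl n k l a := rfl
  set sol : ℝ → MuAux.Sol S := fun β =>
    if h : 1 ≤ β then ⟨β, h, fun r => Ψ r β, (hΨ β h).1, (hΨ β h).2.1, (hΨ β h).2.2⟩
    else ⟨1, le_rfl, fun r => Ψ r 1, (hΨ 1 le_rfl).1, (hΨ 1 le_rfl).2.1,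
      (hΨ 1 le_rfl).2.2⟩ with hsol
  have hbval : ∀ β, 1 ≤ β → (sol β).β = β := by
    intro β h
    rw [hsol]
    simp only [dif_pos h]
  have hψval : ∀ β, 1 ≤ β → (sol β).ψ = fun r => Ψ r β := by
    intro β h
    rw [hsol]
    simp only [dif_pos h]
  have hm2 : 2 < S.m := S.two_lt_m
  refine ⟨?_, ?_, ?_, ?_, ?_⟩
  · -- (a) integrability and nonnegativity
    intro R β hR hβ
    have h1 := (sol β).integrableOn hR
    have h2 := (sol β).integral_nonneg hR
    simp only [hψval β hβ] at h1 h2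
    exact ⟨h1, h2⟩
  · -- (b) continuity and strict monotonicity
    intro R hR
    constructor
    · apply ContinuousOn.congr (MuAux.continuousOn_mu S sol hbval hR)
      intro β hβm
      simp only [hψval β hβm]
    · intro b1 h1 b2 h2 h12
      have hs := MuAux.strictMono_mu S sol hbval hR h1 h2 h12
      simp only [hψval b1 h1, hψval b2 h2] at hs
      exact hs
  · -- (c) lower bound
    intro R β hR hβ
    have h1 := (sol β).integral_lb hR
    rw [hbval β hβ] at h1
    simp only [hψval β hβ] at h1
    rw [← hSm]
    exact h1
  · -- (d) divergence as β → ∞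
    intro R hR
    have hRpos : (0:ℝ) < R := by linarith
    have hc : 0 < R ^ (2 - mkl n k l a) / (mkl n k l a - 2) :=
      div_pos (Real.rpow_pos_of_pos hRpos _) (by rw [← hSm]; linarith)
    apply tendsto_atTop_mono' atTop ?_
      ((tendsto_atTop_add_const_right atTop (-1) tendsto_id).atTop_mul_const hc)
    filter_upwards [eventually_ge_atTop (1:ℝ)] with β hβ
    have h1 := (sol β).integral_lb hR
    rw [hbval β hβ] at h1
    simp only [hψval β hβ] at h1
    rw [← hSm] at *
    have e : (β + -1) * (R ^ (2 - S.m) / (S.m - 2)) = (β - 1) * R ^ (2 - S.m) / (S.m - 2) := by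
      ring
    simp only [id_eq]
    rw [e]
    exact h1
  · -- (e) decay of μ_R
    intro β hβ
    obtain ⟨r₀, C, hr₀1, hC0, htail⟩ := (sol β).tail_ub
    refine ⟨C, r₀, ?_⟩
    intro R hRr₀
    have hR1 : (1:ℝ) ≤ R := le_trans hr₀1 hRr₀
    have hRpos : (0:ℝ) < R := by linarith
    have h2 := htail R hRr₀
    simp only [hψval β hβ] at h2
    rw [← hSm]
    have hpw : (0:ℝ) ≤ R ^ (S.m - 2) := (Real.rpow_pos_of_pos hRpos _).le
    have h3 := mul_le_mul_of_nonneg_left h2 hpw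
    have e0 : R ^ (S.m - 2) * R ^ (2 - S.m) = 1 := by
      rw [← Real.rpow_add hRpos, show S.m - 2 + (2 - S.m) = 0 by ring, Real.rpow_zero]
    nlinarith [h3, e0, hC0]
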